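/- Fix L > 0 and let w̃ be the piecewise approximation with switch points v₁ = (√2 − 1)L and v₂ = (√2 + 1)L. Then the maximum absolute approximation error sup over r ≥ 0 of (√(r² + L²) − w̃(r)) equals (√(4 + 2√2) − √2 − 1)·L, and it is attained at r = v₂ = (√2 + 1)L. In particular, for L = 8.5 the maximum absolute error is less than 1.7. -/

import Mathlib

/-!
Write `E = (√(4 + 2√2) − √2 − 1)·L` for the error at `v₂`. On `[0, v₁]` the error
`√(r² + L²) − L` increases, and at `v₁` it is at most `E`. On `[v₁, v₂]` the error
`√(r² + L²) − (r + L)/√2` is convex, so it is bounded by its values at the switch points.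
Beyond `v₂` the error `√(r² + L²) − r` decreases.
-/

open Real Set

/-- The piecewise approximation `w̃` of the 3D distance, with switch points
`v₁ = (√2 − 1)L` and `v₂ = (√2 + 1)L`: `w̃(r) = L` for `0 ≤ r ≤ v₁`,
`w̃(r) = (r + L)/√2` for `v₁ ≤ r ≤ v₂`, and `w̃(r) = r` for `r > v₂`. -/
noncomputable def wtilde (L r : ℝ) : ℝ :=
  if r ≤ (Real.sqrt 2 - 1) * L then L
  else if r ≤ (Real.sqrt 2 + 1) * L then (r + L) / Real.sqrt 2
  else r

lemma convexOn_sqrt_sq_add_sq (L : ℝ) : ConvexOn ℝ univ (fun r : ℝ => √(r ^ 2 + L ^ 2)) := by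
  have hnorm : (fun r : ℝ => √(r ^ 2 + L ^ 2)) =
      (‖·‖) ∘ AffineMap.lineMap (k := ℝ) !₂[0, L] !₂[1, L] := by
    ext r
    simp [EuclideanSpace.norm_eq, Fin.sum_univ_two, AffineMap.lineMap_apply]
  rw [hnorm]
  simpa using (convexOn_norm convex_univ).comp_affineMap (AffineMap.lineMap !₂[0, L] !₂[1, L])

lemma convexOn_sqrt_sq_add_sq_sub_div_sqrt_two (L : ℝ) :
    ConvexOn ℝ univ (fun r : ℝ => √(r ^ 2 + L ^ 2) - (r + L) / √2) := by
  have hline : ConcaveOn ℝ univ (fun r : ℝ => (r + L) / √2) := by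
    simpa [div_eq_inv_mul] using
      ((concaveOn_id (𝕜 := ℝ) convex_univ).add_const L).smul (c := (√2)⁻¹) (by positivity)
  exact (convexOn_sqrt_sq_add_sq L).sub hline

lemma sqrt_two_add_one_sq_add_one : (√2 + 1) ^ 2 + 1 = 4 + 2 * √2 := by
  linear_combination sq_sqrt (zero_le_two (α := ℝ))

lemma sqrt_two_add_one_le_sqrt_four_add_two_mul_sqrt_two : √2 + 1 ≤ √(4 + 2 * √2) := by
  rw [le_sqrt (by positivity) (by positivity), ← sqrt_two_add_one_sq_add_one]
  linarith

lemma sqrt_two_sub_one_sq_add_one_le : (√2 - 1) ^ 2 + 1 ≤ (√(4 + 2 * √2) - √2) ^ 2 := by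
  have h2 : √2 ^ 2 = 2 := sq_sqrt zero_le_two
  have hQ : √(4 + 2 * √2) ^ 2 = 4 + 2 * √2 := sq_sqrt (by positivity)
  -- `√2 · √(4 + 2√2) = √(8 + 4√2) ≤ √(9 + 4√2) = 1 + 2√2`
  have hprod : √2 * √(4 + 2 * √2) ≤ 1 + 2 * √2 := by
    rw [← sqrt_mul zero_le_two, sqrt_le_left (by positivity)]
    nlinarith
  nlinarith

lemma sqrt_four_add_two_mul_sqrt_two_lt : √(4 + 2 * √2) < √2 + 1.2 := by
  have h2 : √2 ^ 2 = 2 := sq_sqrt zero_le_two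
  have h14 : 1.4 < √2 := by rw [lt_sqrt (by norm_num)]; norm_num
  rw [sqrt_lt' (by positivity)]
  nlinarith

section

variable {L : ℝ}

lemma sqrt_two_sub_one_mul_add_div_sqrt_two : ((√2 - 1) * L + L) / √2 = L := by
  field_simp
  ring

lemma sqrt_two_add_one_mul_add_div_sqrt_two : ((√2 + 1) * L + L) / √2 = (√2 + 1) * L := by
  rw [div_eq_iff (by positivity)]
  linear_combination (-L) * sq_sqrt (zero_le_two (α := ℝ))

lemma wtilde_sqrt_two_add_one_mul (hL : 0 ≤ L) : wtilde L ((√2 + 1) * L) = (√2 + 1) * L := by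
  rw [wtilde]
  split_ifs with hle hle'
  · obtain rfl : L = 0 := by linarith
    simp
  · exact sqrt_two_add_one_mul_add_div_sqrt_two
  · exact absurd le_rfl hle'

lemma sqrt_sq_add_sq_sqrt_two_add_one_mul (hL : 0 ≤ L) :
    √(((√2 + 1) * L) ^ 2 + L ^ 2) = √(4 + 2 * √2) * L := by
  have hsq : ((√2 + 1) * L) ^ 2 + L ^ 2 = (√(4 + 2 * √2) * L) ^ 2 := by
    linear_combination L ^ 2 * sqrt_two_add_one_sq_add_one -
      L ^ 2 * sq_sqrt (by positivity : (0 : ℝ) ≤ 4 + 2 * √2)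
  rw [hsq, sqrt_sq (by positivity)]

lemma sqrt_sq_add_sq_sqrt_two_sub_one_mul_le (hL : 0 ≤ L) :
    √(((√2 - 1) * L) ^ 2 + L ^ 2) ≤ (√(4 + 2 * √2) - √2) * L := by
  have hQ := sqrt_two_add_one_le_sqrt_four_add_two_mul_sqrt_two
  rw [sqrt_le_left (mul_nonneg (by linarith) hL)]
  nlinarith [sqrt_two_sub_one_sq_add_one_le]

lemma sqrt_sq_add_sq_le_add_of_sqrt_two_add_one_mul_le (hL : 0 ≤ L) {r : ℝ}
    (hr : (√2 + 1) * L ≤ r) :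
    √(r ^ 2 + L ^ 2) ≤ r + (√(4 + 2 * √2) - √2 - 1) * L := by
  have hE : 0 ≤ (√(4 + 2 * √2) - √2 - 1) * L :=
    mul_nonneg (by linarith [sqrt_two_add_one_le_sqrt_four_add_two_mul_sqrt_two]) hL
  have hv₂ := sqrt_sq_add_sq_sqrt_two_add_one_mul hL
  rw [sqrt_eq_iff_mul_self_eq (by positivity) (by positivity)] at hv₂
  rw [sqrt_le_left (by nlinarith [sqrt_nonneg 2])]
  nlinarith [mul_le_mul_of_nonneg_right hr hE]

lemma sqrt_sq_add_sq_sub_wtilde_le (hL : 0 ≤ L) {r : ℝ} (hr : 0 ≤ r) :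
    √(r ^ 2 + L ^ 2) - wtilde L r ≤ (√(4 + 2 * √2) - √2 - 1) * L := by
  have hv₁ := sqrt_sq_add_sq_sqrt_two_sub_one_mul_le hL
  rw [wtilde]
  split_ifs with h₁ h₂
  · calc √(r ^ 2 + L ^ 2) - L ≤ √(((√2 - 1) * L) ^ 2 + L ^ 2) - L := by gcongr
      _ ≤ _ := by linarith
  · have hmem : r ∈ segment ℝ ((√2 - 1) * L) ((√2 + 1) * L) := by
      rw [segment_eq_Icc (by linarith)]
      exact ⟨(not_le.1 h₁).le, h₂⟩
    refine ((convexOn_sqrt_sq_add_sq_sub_div_sqrt_two L).le_on_segment trivial trivial hmem).trans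
      (max_le ?_ ?_)
    · rw [sqrt_two_sub_one_mul_add_div_sqrt_two]
      linarith
    · rw [sqrt_two_add_one_mul_add_div_sqrt_two, sqrt_sq_add_sq_sqrt_two_add_one_mul hL]
      linarith
  · linarith [sqrt_sq_add_sq_le_add_of_sqrt_two_add_one_mul_le hL (not_le.1 h₂).le]

end

/-- The maximum absolute approximation error `sup_{r ≥ 0} (√(r² + L²) − w̃(r))` equals
`(√(4 + 2√2) − √2 − 1)·L`, attained at `r = v₂ = (√2 + 1)L`. In particular, for `L = 8.5`
the maximum absolute error is less than `1.7`. -/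
theorem wtilde_max_error (L : ℝ) (hL : 0 < L) :
    IsGreatest ((fun r : ℝ => Real.sqrt (r ^ 2 + L ^ 2) - wtilde L r) '' Ici 0)
      ((Real.sqrt (4 + 2 * Real.sqrt 2) - Real.sqrt 2 - 1) * L) ∧
    Real.sqrt (((Real.sqrt 2 + 1) * L) ^ 2 + L ^ 2) - wtilde L ((Real.sqrt 2 + 1) * L) =
      (Real.sqrt (4 + 2 * Real.sqrt 2) - Real.sqrt 2 - 1) * L ∧
    (L = 8.5 → (Real.sqrt (4 + 2 * Real.sqrt 2) - Real.sqrt 2 - 1) * L < 1.7) := by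
  have hv₂ : √(((√2 + 1) * L) ^ 2 + L ^ 2) - wtilde L ((√2 + 1) * L) =
      (√(4 + 2 * √2) - √2 - 1) * L := by
    rw [sqrt_sq_add_sq_sqrt_two_add_one_mul hL.le, wtilde_sqrt_two_add_one_mul hL.le]
    ring
  refine ⟨⟨⟨(√2 + 1) * L, mem_Ici.mpr (by positivity), hv₂⟩, ?_⟩, hv₂, ?_⟩
  · rintro _ ⟨r, hr, rfl⟩
    exact sqrt_sq_add_sq_sub_wtilde_le hL.le hr
  · rintro rfl
    linarith [sqrt_four_add_two_mul_sqrt_two_lt]
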